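/- arXiv:2305.03227 — 6 statements merged into one kernel-verified Lean document; each statement's English description precedes it below -/
import Mathlib

section
/- Let γ₁, γ₂ be positive reals with 0 < γ₁ < 1 < γ₁ + γ₂, and let Ψ : ℝ₊ × ℝ₊ → ℝ satisfy liminf_{x→(0,0)} Ψ(x) ≥ 0 and γ₁Ψ(x) + γ₂Ψ(y) ≤ Ψ(γ₁x + γ₂y) for all x, y in the open positive quadrant. Then Ψ is positively homogeneous: Ψ(γx) = γΨ(x) for all γ > 0 and x in the positive quadrant. -/
/-!
Restricted to a ray `t ↦ t • y`, the problem becomes one-dimensional: for `φ(t) = Ψ(t • y) - t Ψ(y)`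
one has `φ(1) = 0` and has to show `φ ≥ 0`, which gives `γ Ψ(y) ≤ Ψ(γ • y)`; applying this also to
`γ • y` and `γ⁻¹` gives equality. With `s = γ₁ + γ₂ > 1`, taking `a = b` shows `φ(s t) ≥ s φ(t)`,
so `φ ≥ 0` at the powers `sⁿ`, and `φ(r) ≥ -C r` for large `r` for some `C`. Writing a large `r`
as `γ₁ sⁿ + γ₂ b` with `sⁿ` as large as possible shrinks `C` by the factor `1 - 1/(2s)`, so
eventually `φ(r) ≥ -C r` for every `C > 0`. On the other hand, if `φ(γ) < 0`, writing `a` as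
`γ₁ a' + γ₂ b` with `b` small (where `φ(b) ≳ 0` by the liminf condition) propagates negativity
from `a` to `a' ≈ a / γ₁`, and since `γ₁ < 1` this gives arbitrarily large `a` with `φ(a) ≤ -κ a`.
-/

open Filter Topology Set

def WeightedSuperadditive (γ₁ γ₂ : ℝ) (φ : ℝ → ℝ) : Prop :=
  ∀ ⦃a b : ℝ⦄, 0 < a → 0 < b → γ₁ * φ a + γ₂ * φ b ≤ φ (γ₁ * a + γ₂ * b)

def LiminfAtZeroNonneg (φ : ℝ → ℝ) : Prop :=
  ∀ ε > 0, ∀ᶠ t in 𝓝[>] (0 : ℝ), -ε < φ t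

lemma LiminfAtZeroNonneg.sub_linear {φ : ℝ → ℝ} (h : LiminfAtZeroNonneg φ) (c : ℝ) :
    LiminfAtZeroNonneg fun t => φ t - c * t := by
  intro ε hε
  have hlin : Tendsto (fun t => c * t) (𝓝[>] 0) (𝓝 0) :=
    ((continuous_const_mul c).tendsto' 0 0 (mul_zero c)).mono_left nhdsWithin_le_nhds
  filter_upwards [h (ε / 2) (half_pos hε), hlin.eventually (Iio_mem_nhds (half_pos hε))]
    with t hφ (hct : c * t < ε / 2)
  linarith

lemma frequently_atTop_of_forall_exists_mul_le {S : Set ℝ} {ρ a₀ : ℝ} (hρ : 1 < ρ)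
    (ha₀ : 0 < a₀) (h₀ : a₀ ∈ S) (hS : ∀ a ∈ S, ∃ a' ∈ S, ρ * a ≤ a') :
    ∃ᶠ a in atTop, a ∈ S := by
  have hpow : ∀ n : ℕ, ∃ a ∈ S, ρ ^ n * a₀ ≤ a := by
    intro n
    induction n with
    | zero => exact ⟨a₀, h₀, by simp⟩
    | succ n ih =>
      obtain ⟨a, ha, hle⟩ := ih
      obtain ⟨a', ha', hle'⟩ := hS a ha
      refine ⟨a', ha', ?_⟩
      calc ρ ^ (n + 1) * a₀ = ρ * (ρ ^ n * a₀) := by ring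
        _ ≤ ρ * a := by gcongr
        _ ≤ a' := hle'
  refine frequently_atTop.2 fun M => ?_
  obtain ⟨n, hn⟩ := pow_unbounded_of_one_lt (M / a₀) hρ
  obtain ⟨a, ha, hle⟩ := hpow n
  exact ⟨a, by linarith [(div_lt_iff₀ ha₀).1 hn], ha⟩

namespace WeightedSuperadditive

variable {γ₁ γ₂ : ℝ} {φ : ℝ → ℝ}

lemma sub_linear (h : WeightedSuperadditive γ₁ γ₂ φ) (c : ℝ) :
    WeightedSuperadditive γ₁ γ₂ fun t => φ t - c * t := by
  intro a b ha hb
  have := h ha hb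
  linarith

lemma mul_apply_le (h : WeightedSuperadditive γ₁ γ₂ φ) {t : ℝ} (ht : 0 < t) :
    (γ₁ + γ₂) * φ t ≤ φ ((γ₁ + γ₂) * t) := by
  simpa only [← add_mul] using h ht ht

lemma pow_mul_apply_le (h : WeightedSuperadditive γ₁ γ₂ φ) (hs : 0 < γ₁ + γ₂) {t : ℝ}
    (ht : 0 < t) (n : ℕ) : (γ₁ + γ₂) ^ n * φ t ≤ φ ((γ₁ + γ₂) ^ n * t) := by
  induction n with
  | zero => simp
  | succ n ih =>
    calc (γ₁ + γ₂) ^ (n + 1) * φ t = (γ₁ + γ₂) * ((γ₁ + γ₂) ^ n * φ t) := by ring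
      _ ≤ (γ₁ + γ₂) * φ ((γ₁ + γ₂) ^ n * t) := by gcongr
      _ ≤ φ ((γ₁ + γ₂) * ((γ₁ + γ₂) ^ n * t)) := h.mul_apply_le (by positivity)
      _ = φ ((γ₁ + γ₂) ^ (n + 1) * t) := by ring_nf

lemma apply_pow_nonneg (h : WeightedSuperadditive γ₁ γ₂ φ) (hs : 0 < γ₁ + γ₂)
    (h₁ : 0 ≤ φ 1) (n : ℕ) : 0 ≤ φ ((γ₁ + γ₂) ^ n) := by
  simpa using (mul_nonneg (pow_nonneg hs.le n) h₁).trans (h.pow_mul_apply_le hs one_pos n)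

lemma exists_linear_lower_bound (h : WeightedSuperadditive γ₁ γ₂ φ) (hs : 1 < γ₁ + γ₂)
    (hlim : LiminfAtZeroNonneg φ) : ∃ C, ∀ᶠ y in atTop, -(C * y) ≤ φ y := by
  set s := γ₁ + γ₂
  have hs₀ : 0 < s := by linarith
  obtain ⟨δ, hδ, hφδ⟩ := mem_nhdsGT_iff_exists_Ioo_subset.1 (hlim 1 one_pos)
  have ht₀ : 0 < δ / s := div_pos hδ hs₀
  refine ⟨(δ / s)⁻¹, eventually_atTop.2 ⟨δ / s, fun y hy => ?_⟩⟩
  -- `y = sⁿ t` with `t ∈ [δ / s, δ)`, where `φ t > -1`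
  obtain ⟨n, hn₁, hn₂⟩ := exists_nat_pow_near ((one_le_div₀ ht₀).2 hy) hs
  have hsn : 0 < s ^ n := by positivity
  rw [le_div_iff₀ ht₀] at hn₁
  rw [div_lt_iff₀ ht₀, pow_succ, mul_assoc, mul_div_cancel₀ δ hs₀.ne'] at hn₂
  have ht : y / s ^ n ∈ Ioo 0 δ := ⟨div_pos (ht₀.trans_le hy) hsn, (div_lt_iff₀' hsn).2 hn₂⟩
  have hφt : -1 < φ (y / s ^ n) := hφδ ht
  have hup := h.pow_mul_apply_le hs₀ ht.1 n
  rw [mul_div_cancel₀ y hsn.ne'] at hup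
  calc -((δ / s)⁻¹ * y) ≤ -s ^ n := by
        rw [neg_le_neg_iff, ← div_eq_inv_mul, le_div_iff₀ ht₀]; exact hn₁
    _ ≤ s ^ n * φ (y / s ^ n) := by nlinarith
    _ ≤ φ y := hup

lemma linear_lower_bound_mul (h : WeightedSuperadditive γ₁ γ₂ φ) (hγ₁ : 0 < γ₁)
    (hγ₂ : 0 < γ₂) (hs : 1 < γ₁ + γ₂) (h₁ : 0 ≤ φ 1) {C : ℝ} (hC : 0 ≤ C)
    (hbound : ∀ᶠ y in atTop, -(C * y) ≤ φ y) :
    ∀ᶠ y in atTop, -((1 - (2 * (γ₁ + γ₂))⁻¹) * C * y) ≤ φ y := by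
  set s := γ₁ + γ₂
  have hs₀ : 0 < s := by linarith
  obtain ⟨y₀, hy₀⟩ := eventually_atTop.1 (hbound.and (eventually_gt_atTop 0))
  refine eventually_atTop.2 ⟨max (2 * γ₂ * y₀) (γ₁ + γ₂ * y₀), fun y hy => ?_⟩
  obtain ⟨hy₁, hy₂⟩ := max_le_iff.1 hy
  -- `y = γ₁ sⁿ + γ₂ b` with `sⁿ` maximal subject to `b ≥ y₀`
  obtain ⟨n, hn₁, hn₂⟩ :=
    exists_nat_pow_near ((one_le_div₀ hγ₁).2 (by linarith : γ₁ ≤ y - γ₂ * y₀)) hs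
  rw [le_div_iff₀' hγ₁] at hn₁
  rw [div_lt_iff₀' hγ₁, pow_succ] at hn₂
  set b := (y - γ₁ * s ^ n) / γ₂ with hb_def
  have hyb : γ₁ * s ^ n + γ₂ * b = y := by rw [hb_def]; field_simp; ring
  have hb : y₀ ≤ b := by rw [hb_def, le_div_iff₀ hγ₂]; linarith
  obtain ⟨hφb, hb₀⟩ := hy₀ b hb
  have hmix := h (pow_pos hs₀ n) hb₀
  rw [hyb] at hmix
  have hγ₂b : γ₂ * b ≤ (1 - (2 * s)⁻¹) * y := by
    have : y ≤ 2 * s * (γ₁ * s ^ n) := by nlinarith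
    have : y * (2 * s)⁻¹ ≤ γ₁ * s ^ n := by
      rw [← div_eq_mul_inv, div_le_iff₀ (by positivity)]; linarith
    linarith
  have hφP := mul_nonneg hγ₁.le (h.apply_pow_nonneg hs₀ h₁ n)
  have hφb' := mul_le_mul_of_nonneg_left hφb hγ₂.le
  have hCb := mul_le_mul_of_nonneg_left hγ₂b hC
  linarith

lemma forall_linear_lower_bound (h : WeightedSuperadditive γ₁ γ₂ φ) (hγ₁ : 0 < γ₁)
    (hγ₂ : 0 < γ₂) (hs : 1 < γ₁ + γ₂) (hlim : LiminfAtZeroNonneg φ) (h₁ : 0 ≤ φ 1)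
    {C : ℝ} (hC : 0 < C) : ∀ᶠ y in atTop, -(C * y) ≤ φ y := by
  have mono : ∀ {c c' : ℝ}, c ≤ c' → (∀ᶠ y in atTop, -(c * y) ≤ φ y) →
      ∀ᶠ y in atTop, -(c' * y) ≤ φ y := fun hcc' hc =>
    (hc.and (eventually_ge_atTop 0)).mono fun y ⟨hy, hy₀⟩ => by nlinarith
  obtain ⟨C₀, hC₀⟩ := h.exists_linear_lower_bound hs hlim
  set θ := 1 - (2 * (γ₁ + γ₂))⁻¹ with hθ_def
  have hθ₀ : 0 ≤ θ := by
    rw [hθ_def, sub_nonneg]; exact inv_le_one_of_one_le₀ (by linarith)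
  have hθ₁ : θ < 1 := sub_lt_self 1 (inv_pos.2 (by linarith))
  have hiter : ∀ k : ℕ, ∀ᶠ y in atTop, -(θ ^ k * max C₀ 1 * y) ≤ φ y := by
    intro k
    induction k with
    | zero => exact mono (by simp) hC₀
    | succ k ih =>
      have hC' : 0 ≤ θ ^ k * max C₀ 1 := mul_nonneg (pow_nonneg hθ₀ k) (by positivity)
      exact mono (le_of_eq (by rw [hθ_def]; ring)) (h.linear_lower_bound_mul hγ₁ hγ₂ hs h₁ hC' ih)
  have hM : (0 : ℝ) < max C₀ 1 := by positivity
  obtain ⟨k, hk⟩ := exists_pow_lt_of_lt_one (div_pos hC hM) hθ₁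
  exact mono ((lt_div_iff₀ hM).1 hk).le (hiter k)

lemma frequently_apply_le_neg_mul (h : WeightedSuperadditive γ₁ γ₂ φ) (hγ₁ : 0 < γ₁)
    (hγ₁₁ : γ₁ < 1) (hγ₂ : 0 < γ₂) (hlim : LiminfAtZeroNonneg φ) {γ : ℝ} (hγ : 0 < γ)
    (hneg : φ γ < 0) : ∃ κ > 0, ∃ᶠ y in atTop, φ y ≤ -(κ * y) := by
  set K := -φ γ / 2 with hK_def
  have hK : 0 < K := by rw [hK_def]; linarith
  set κ := K / γ with hκ_def
  have hκ : 0 < κ := by positivity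
  -- the slack `K` in the invariant absorbs the error `γ₂ φ b > -(1 - γ₁) K` of each step
  let S : Set ℝ := {a | 0 < a ∧ φ a + K ≤ -(κ * a)}
  have hγS : γ ∈ S := ⟨hγ, by rw [hκ_def, div_mul_cancel₀ K hγ.ne']; linarith⟩
  have step : ∀ a ∈ S, ∃ a' ∈ S, (1 + γ₁) / (2 * γ₁) * a ≤ a' := by
    rintro a ⟨ha₀, ha⟩
    have hc : 0 < a * (1 - γ₁) / (2 * γ₂) := div_pos (mul_pos ha₀ (by linarith)) (by positivity)
    obtain ⟨b, hφb, hb₀, hb⟩ := ((hlim _ (div_pos (mul_pos hK (sub_pos.2 hγ₁₁)) hγ₂)).and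
      (eventually_mem_nhdsWithin.and (nhdsWithin_le_nhds (Iio_mem_nhds hc)))).exists
    have hb₀ : 0 < b := hb₀
    have hb : b < a * (1 - γ₁) / (2 * γ₂) := hb
    have hφb : -(K * (1 - γ₁)) < γ₂ * φ b := by
      have := mul_lt_mul_of_pos_left hφb hγ₂
      rwa [mul_neg, mul_div_cancel₀ _ hγ₂.ne'] at this
    have hγ₂b : γ₂ * b < a * (1 - γ₁) / 2 := by
      rw [lt_div_iff₀ (by positivity)] at hb; linarith
    set a' := (a - γ₂ * b) / γ₁ with ha'_def
    have hsum : γ₁ * a' + γ₂ * b = a := by rw [ha'_def]; field_simp; ring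
    have hρ : (1 + γ₁) / (2 * γ₁) * a ≤ a' := by
      rw [ha'_def, div_mul_eq_mul_div, div_le_div_iff₀ (by positivity) hγ₁]; nlinarith
    have ha'₀ : 0 < a' := lt_of_lt_of_le (by positivity) hρ
    have hmix := h ha'₀ hb₀
    rw [hsum] at hmix
    have hκsum : κ * (γ₁ * a') + κ * (γ₂ * b) = κ * a := by rw [← mul_add, hsum]
    refine ⟨a', ⟨ha'₀, ?_⟩, hρ⟩
    have : γ₁ * (φ a' + K) ≤ γ₁ * -(κ * a') := by linarith [mul_pos hκ (mul_pos hγ₂ hb₀)]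
    exact le_of_mul_le_mul_left this hγ₁
  have hρ : 1 < (1 + γ₁) / (2 * γ₁) := by rw [one_lt_div (by positivity)]; linarith
  exact ⟨κ, hκ, (frequently_atTop_of_forall_exists_mul_le hρ hγ hγS step).mono
    fun y hy => by linarith [hy.2]⟩

lemma nonneg (h : WeightedSuperadditive γ₁ γ₂ φ) (hγ₁ : 0 < γ₁) (hγ₁₁ : γ₁ < 1)
    (hγ₂ : 0 < γ₂) (hs : 1 < γ₁ + γ₂) (hlim : LiminfAtZeroNonneg φ) (h₁ : 0 ≤ φ 1) {γ : ℝ}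
    (hγ : 0 < γ) : 0 ≤ φ γ := by
  by_contra! hneg
  obtain ⟨κ, hκ, hfreq⟩ := h.frequently_apply_le_neg_mul hγ₁ hγ₁₁ hγ₂ hlim hγ hneg
  obtain ⟨y, hy, hyκ, hy₀⟩ := (hfreq.and_eventually
    ((h.forall_linear_lower_bound hγ₁ hγ₂ hs hlim h₁ (half_pos hκ)).and
      (eventually_gt_atTop 0))).exists
  nlinarith [mul_pos hκ hy₀]

lemma mul_apply_one_le (h : WeightedSuperadditive γ₁ γ₂ φ) (hγ₁ : 0 < γ₁) (hγ₁₁ : γ₁ < 1)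
    (hγ₂ : 0 < γ₂) (hs : 1 < γ₁ + γ₂) (hlim : LiminfAtZeroNonneg φ) {γ : ℝ} (hγ : 0 < γ) :
    γ * φ 1 ≤ φ γ := by
  have := (h.sub_linear (φ 1)).nonneg hγ₁ hγ₁₁ hγ₂ hs (hlim.sub_linear (φ 1)) (by simp) hγ
  linarith

end WeightedSuperadditive

lemma weightedSuperadditive_comp_smul {γ₁ γ₂ : ℝ} {Ψ : ℝ × ℝ → ℝ}
    (hineq : ∀ x y : ℝ × ℝ, 0 < x.1 → 0 < x.2 → 0 < y.1 → 0 < y.2 →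
      γ₁ * Ψ x + γ₂ * Ψ y ≤ Ψ (γ₁ • x + γ₂ • y))
    {y : ℝ × ℝ} (hy₁ : 0 < y.1) (hy₂ : 0 < y.2) :
    WeightedSuperadditive γ₁ γ₂ fun t => Ψ (t • y) := by
  intro a b ha hb
  have := hineq (a • y) (b • y) (mul_pos ha hy₁) (mul_pos ha hy₂) (mul_pos hb hy₁)
    (mul_pos hb hy₂)
  rwa [smul_smul, smul_smul, ← add_smul] at this

lemma liminfAtZeroNonneg_comp_smul {Ψ : ℝ × ℝ → ℝ}
    (hliminf : ∀ ε > 0, ∃ δ > 0, ∀ x₁ x₂ : ℝ, 0 < x₁ → x₁ < δ → 0 < x₂ → x₂ < δ →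
      -ε < Ψ (x₁, x₂))
    {y : ℝ × ℝ} (hy₁ : 0 < y.1) (hy₂ : 0 < y.2) :
    LiminfAtZeroNonneg fun t => Ψ (t • y) := by
  intro ε hε
  obtain ⟨δ, hδ, hΨ⟩ := hliminf ε hε
  have hray : Tendsto (fun t : ℝ => t • y) (𝓝[>] 0) (𝓝 0) :=
    ((continuous_id.smul continuous_const).tendsto' 0 0 (zero_smul ℝ y)).mono_left
      nhdsWithin_le_nhds
  filter_upwards [self_mem_nhdsWithin,
    hray.eventually (prod_mem_nhds (Iio_mem_nhds hδ) (Iio_mem_nhds hδ))]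
    with t (ht : 0 < t) ⟨h₁, h₂⟩
  exact hΨ _ _ (mul_pos ht hy₁) h₁ (mul_pos ht hy₂) h₂

theorem stmt_0 (γ₁ γ₂ : ℝ) (hγ₁ : 0 < γ₁) (hγ₁1 : γ₁ < 1) (hγ₂ : 0 < γ₂)
    (hsum : 1 < γ₁ + γ₂) (Ψ : ℝ × ℝ → ℝ)
    (hliminf : ∀ ε > 0, ∃ δ > 0, ∀ x₁ x₂ : ℝ, 0 < x₁ → x₁ < δ → 0 < x₂ → x₂ < δ →
      -ε < Ψ (x₁, x₂))
    (hineq : ∀ x y : ℝ × ℝ, 0 < x.1 → 0 < x.2 → 0 < y.1 → 0 < y.2 →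
      γ₁ * Ψ x + γ₂ * Ψ y ≤ Ψ (γ₁ • x + γ₂ • y)) :
    ∀ γ : ℝ, 0 < γ → ∀ x : ℝ × ℝ, 0 < x.1 → 0 < x.2 → Ψ (γ • x) = γ * Ψ x := by
  have ray : ∀ y : ℝ × ℝ, 0 < y.1 → 0 < y.2 → ∀ γ : ℝ, 0 < γ → γ * Ψ y ≤ Ψ (γ • y) :=
    fun y hy₁ hy₂ γ hγ => by
      simpa using (weightedSuperadditive_comp_smul hineq hy₁ hy₂).mul_apply_one_le hγ₁ hγ₁1
        hγ₂ hsum (liminfAtZeroNonneg_comp_smul hliminf hy₁ hy₂) hγ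
  intro γ hγ x hx₁ hx₂
  have hback := ray (γ • x) (mul_pos hγ hx₁) (mul_pos hγ hx₂) γ⁻¹ (inv_pos.2 hγ)
  rw [inv_smul_smul₀ hγ.ne', inv_mul_le_iff₀ hγ] at hback
  exact le_antisymm hback (ray x hx₁ hx₂ γ hγ)
end

section
/- Let Λ : ℝ₊ → ℝ₊ satisfy the Jensen-type equation β₁Λ(s) + β₂Λ(t) = Λ(β₁s + β₂t) for all s, t > 0, where β₁, β₂ > 0 are fixed, and suppose Λ(x) → 0 as x → 0⁺. Then Λ is additive on ℝ₊: Λ(x) + Λ(y) = Λ(x+y) for all x, y > 0, and consequently there is a constant m > 0 with Λ(x) = m·x for all x > 0. -/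
open Filter Set

theorem stmt_6 (β₁ β₂ : ℝ) (hβ₁ : 0 < β₁) (hβ₂ : 0 < β₂) (Λ : ℝ → ℝ)
    (hpos : ∀ x : ℝ, 0 < x → 0 < Λ x)
    (hjensen : ∀ s t : ℝ, 0 < s → 0 < t → β₁ * Λ s + β₂ * Λ t = Λ (β₁ * s + β₂ * t))
    (hlim : Filter.Tendsto Λ (nhdsWithin 0 (Set.Ioi 0)) (nhds 0)) :
    (∀ x y : ℝ, 0 < x → 0 < y → Λ x + Λ y = Λ (x + y)) ∧
      ∃ m : ℝ, 0 < m ∧ ∀ x : ℝ, 0 < x → Λ x = m * x := by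
  -- composition lemma: Λ (x / b) → 0 as x → 0⁺
  have hcomp : ∀ b : ℝ, 0 < b →
      Tendsto (fun x => Λ (x / b)) (nhdsWithin 0 (Ioi 0)) (nhds 0) := by
    intro b hb
    apply hlim.comp
    rw [tendsto_nhdsWithin_iff]
    constructor
    · have : Tendsto (fun x : ℝ => x / b) (nhds 0) (nhds (0 / b)) :=
        (continuous_id.div_const b).tendsto 0
      simpa using this.mono_left nhdsWithin_le_nhds
    · filter_upwards [self_mem_nhdsWithin] with x hx
      exact div_pos hx hb
  -- split identity
  have hsum : ∀ x y : ℝ, 0 < x → 0 < y →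
      Λ (x + y) = β₁ * Λ (x / β₁) + β₂ * Λ (y / β₂) := by
    intro x y hx hy
    have := hjensen (x / β₁) (y / β₂) (div_pos hx hβ₁) (div_pos hy hβ₂)
    rw [mul_div_cancel₀ _ hβ₁.ne', mul_div_cancel₀ _ hβ₂.ne'] at this
    linarith
  -- the difference F x := β₁Λ(x/β₁) - β₂Λ(x/β₂) is constant
  have hFconst : ∀ x y : ℝ, 0 < x → 0 < y →
      β₁ * Λ (x / β₁) - β₂ * Λ (x / β₂) = β₁ * Λ (y / β₁) - β₂ * Λ (y / β₂) := by
    intro x y hx hy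
    have h1 := hsum x y hx hy
    have h2 := hsum y x hy hx
    rw [add_comm y x] at h2
    linarith
  -- the constant is 0, using the limit
  have hF0 : ∀ x : ℝ, 0 < x → β₁ * Λ (x / β₁) = β₂ * Λ (x / β₂) := by
    have hT : Tendsto (fun x => β₁ * Λ (x / β₁) - β₂ * Λ (x / β₂))
        (nhdsWithin 0 (Ioi 0)) (nhds 0) := by
      have := ((hcomp β₁ hβ₁).const_mul β₁).sub ((hcomp β₂ hβ₂).const_mul β₂)
      simpa using this
    have hT' : Tendsto (fun _ : ℝ => β₁ * Λ (1 / β₁) - β₂ * Λ (1 / β₂))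
        (nhdsWithin 0 (Ioi 0)) (nhds 0) := by
      apply hT.congr'
      filter_upwards [self_mem_nhdsWithin] with x hx
      exact (hFconst x 1 hx one_pos)
    have h0 : β₁ * Λ (1 / β₁) - β₂ * Λ (1 / β₂) = 0 :=
      (tendsto_nhds_unique tendsto_const_nhds hT')
    intro x hx
    have := hFconst x 1 hx one_pos
    linarith
  set h : ℝ → ℝ := fun x => β₁ * Λ (x / β₁) with hh
  have hhlim : Tendsto h (nhdsWithin 0 (Ioi 0)) (nhds 0) := by
    have := (hcomp β₁ hβ₁).const_mul β₁
    simpa [hh] using this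
  have hsum' : ∀ x y : ℝ, 0 < x → 0 < y → Λ (x + y) = h x + h y := by
    intro x y hx hy
    rw [hsum x y hx hy, ← hF0 y hy]
  -- cocycle: h (x+y) = h x + h (y+y) - h y
  have hco : ∀ x y : ℝ, 0 < x → 0 < y → h (x + y) = h x + h (y + y) - h y := by
    intro x y hx hy
    have h1 : Λ (x + (y + y)) = h x + h (y + y) := hsum' x (y + y) hx (by linarith)
    have h2 : Λ ((x + y) + y) = h (x + y) + h y := hsum' (x + y) y (by linarith) hy
    rw [show x + (y + y) = (x + y) + y by ring] at h1
    linarith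
  -- h (x+x) - 2 h x is constant, and equals 0 by the limit
  have hdconst : ∀ x y : ℝ, 0 < x → 0 < y → h (x + x) - 2 * h x = h (y + y) - 2 * h y := by
    intro x y hx hy
    have h1 := hco x y hx hy
    have h2 := hco y x hy hx
    rw [add_comm y x] at h2
    linarith
  have hdub : ∀ x : ℝ, 0 < x → h (x + x) = 2 * h x := by
    have hT : Tendsto (fun x => h (x + x) - 2 * h x) (nhdsWithin 0 (Ioi 0)) (nhds 0) := by
      have hdub' : Tendsto (fun x : ℝ => h (x + x)) (nhdsWithin 0 (Ioi 0)) (nhds 0) := by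
        apply hhlim.comp
        rw [tendsto_nhdsWithin_iff]
        constructor
        · have : Tendsto (fun x : ℝ => x + x) (nhds 0) (nhds (0 + 0)) :=
            (continuous_id.add continuous_id).tendsto 0
          simpa using this.mono_left nhdsWithin_le_nhds
        · filter_upwards [self_mem_nhdsWithin] with x hx
          have : (0:ℝ) < x := hx
          simpa using add_pos this this
      have := hdub'.sub (hhlim.const_mul 2)
      simpa using this
    have hT' : Tendsto (fun _ : ℝ => h (1 + 1) - 2 * h 1)
        (nhdsWithin 0 (Ioi 0)) (nhds 0) := by
      apply hT.congr'
      filter_upwards [self_mem_nhdsWithin] with x hx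
      exact hdconst x 1 hx one_pos
    have h0 : h (1 + 1) - 2 * h 1 = 0 := tendsto_nhds_unique tendsto_const_nhds hT'
    intro x hx
    have := hdconst x 1 hx one_pos
    linarith
  -- h is additive
  have hadd_h : ∀ x y : ℝ, 0 < x → 0 < y → h (x + y) = h x + h y := by
    intro x y hx hy
    have := hco x y hx hy
    rw [hdub y hy] at this
    linarith
  -- Λ = h on positives
  have hΛh : ∀ t : ℝ, 0 < t → Λ t = h t := by
    intro t ht
    have ht2 : 0 < t / 2 := by linarith
    have h1 : Λ (t / 2 + t / 2) = h (t / 2) + h (t / 2) := hsum' _ _ ht2 ht2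
    have h2 : h (t / 2 + t / 2) = h (t / 2) + h (t / 2) := hadd_h _ _ ht2 ht2
    rw [show t / 2 + t / 2 = t by ring] at h1 h2
    linarith
  -- Λ is additive
  have hadd : ∀ x y : ℝ, 0 < x → 0 < y → Λ x + Λ y = Λ (x + y) := by
    intro x y hx hy
    rw [hsum' x y hx hy, hΛh x hx, hΛh y hy]
  refine ⟨hadd, Λ 1, hpos 1 one_pos, ?_⟩
  -- monotonicity
  have hmono : ∀ x y : ℝ, 0 < x → x < y → Λ x < Λ y := by
    intro x y hx hxy
    have := hadd x (y - x) hx (by linarith)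
    rw [show x + (y - x) = y by ring] at this
    have := hpos (y - x) (by linarith)
    linarith
  -- natural multiples
  have hnat : ∀ n : ℕ, ∀ x : ℝ, 0 < x → Λ ((n + 1 : ℕ) * x) = (n + 1 : ℕ) * Λ x := by
    intro n
    induction n with
    | zero => intro x hx; norm_num
    | succ k ih =>
      intro x hx
      have h1 := hadd ((k + 1 : ℕ) * x) x (by positivity) hx
      rw [ih x hx] at h1
      have : ((k + 1 + 1 : ℕ) : ℝ) * x = ((k + 1 : ℕ) : ℝ) * x + x := by
        push_cast; ring
      rw [this, ← h1]
      push_cast; ring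
  -- value at positive rationals
  have hrat : ∀ q : ℚ, 0 < q → Λ (q : ℝ) = Λ 1 * (q : ℝ) := by
    intro q hq
    obtain ⟨a, ha⟩ : ∃ a : ℕ, q.num = (a : ℤ) + 1 := by
      refine ⟨(q.num - 1).toNat, ?_⟩
      have : 0 < q.num := Rat.num_pos.mpr hq
      omega
    set b := q.den with hb
    have hbpos : 0 < b := q.pos
    have hqR : (q : ℝ) = ((a : ℝ) + 1) / b := by
      rw [Rat.cast_def, ha]; push_cast; ring
    have hqpos : (0:ℝ) < ((a : ℝ) + 1) / b := by positivity
    -- Λ(b * (q:ℝ)) = b * Λ(q:ℝ), i.e. Λ(a+1) = b * Λ q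
    obtain ⟨b', hb'⟩ : ∃ b' : ℕ, b = b' + 1 := ⟨b - 1, by omega⟩
    have h1 : Λ ((b : ℕ) * (q:ℝ)) = (b : ℕ) * Λ (q:ℝ) := by
      rw [hb']; exact hnat b' (q:ℝ) (by rw [hqR]; exact hqpos)
    have hcast : ((b : ℕ) : ℝ) * (q:ℝ) = (a : ℝ) + 1 := by
      rw [hqR]
      field_simp
    rw [hcast] at h1
    have h2 : Λ ((a : ℝ) + 1) = ((a:ℝ) + 1) * Λ 1 := by
      have := hnat a 1 one_pos
      push_cast at this ⊢
      simpa using this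
    rw [h2] at h1
    have hbne : ((b:ℕ):ℝ) ≠ 0 := by positivity
    rw [hqR] at h1 ⊢
    field_simp at h1 ⊢
    nlinarith [h1]
  -- squeeze
  intro x hx
  by_contra hne
  have hm := hpos 1 one_pos
  rcases lt_or_gt_of_ne hne with hlt | hgt
  · -- Λ x < Λ 1 * x : pick rational q with Λ x / Λ 1 < q < x
    have hq : Λ x / Λ 1 < x := (div_lt_iff₀ hm).mpr (by linarith [mul_comm (Λ 1) x])
    obtain ⟨q, hq1, hq2⟩ := exists_rat_btwn hq
    have hqpos : (0:ℚ) < q := by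
      have : (0:ℝ) < Λ x / Λ 1 := div_pos (hpos x hx) hm
      exact_mod_cast lt_trans this hq1
    have h1 : Λ (q:ℝ) < Λ x := hmono _ _ (by exact_mod_cast hqpos) hq2
    rw [hrat q hqpos] at h1
    have : Λ x < Λ 1 * (q:ℝ) := by
      rw [mul_comm]
      exact (div_lt_iff₀ hm).mp hq1
    linarith
  · -- Λ 1 * x < Λ x
    have hq : x < Λ x / Λ 1 := (lt_div_iff₀ hm).mpr (by linarith [mul_comm (Λ 1) x])
    obtain ⟨q, hq1, hq2⟩ := exists_rat_btwn hq
    have hqpos : (0:ℚ) < q := by exact_mod_cast lt_trans hx hq1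
    have h1 : Λ x < Λ (q:ℝ) := hmono _ _ hx hq1
    rw [hrat q hqpos] at h1
    have : Λ 1 * (q:ℝ) < Λ x := by
      rw [mul_comm]
      exact (lt_div_iff₀ hm).mp hq2
    linarith
end

section
/- Let b ∈ (0,1] and β₁, β₂ > 0. Then the function t ↦ (β₁t^{1/b} + β₂)^b is convex on ℝ₊. -/
/-! With `p = 1 / b ≥ 1`, the function is `t ↦ ‖(β₁ ^ b * t, β₂ ^ b)‖_p`, the `ℓ^p` norm of an
affine curve in `ℝ²`, hence convex. -/

open Real

theorem convexOn_rpow_add_rpow_rpow_one_div {p c d : ℝ} (hp : 1 ≤ p) (hc : 0 ≤ c) (hd : 0 ≤ d) :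
    ConvexOn ℝ (Set.Ici 0) (fun t : ℝ => ((c * t) ^ p + d ^ p) ^ (1 / p)) := by
  have : Fact (1 ≤ ENNReal.ofReal p) := ⟨by simpa using ENNReal.ofReal_le_ofReal hp⟩
  have hp' : (ENNReal.ofReal p).toReal = p := ENNReal.toReal_ofReal (by linarith)
  let curve : ℝ →ᵃ[ℝ] WithLp (ENNReal.ofReal p) (ℝ × ℝ) :=
    AffineMap.lineMap (WithLp.toLp _ (0, d)) (WithLp.toLp _ (c, d))
  refine ((convexOn_norm convex_univ).comp_affineMap curve).subset (Set.subset_univ _)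
    (convex_Ici 0) |>.congr fun t ht => ?_
  simp [curve, AffineMap.lineMap_apply, WithLp.prod_norm_eq_add (by rw [hp']; linarith), hp',
    abs_of_nonneg hc, abs_of_nonneg hd, abs_of_nonneg (Set.mem_Ici.mp ht), mul_comm]

theorem stmt_10 (b β₁ β₂ : ℝ) (hb0 : 0 < b) (hb1 : b ≤ 1) (hβ₁ : 0 < β₁) (hβ₂ : 0 < β₂) :
    ConvexOn ℝ (Set.Ioi 0) (fun t : ℝ => (β₁ * t ^ (1 / b) + β₂) ^ b) := by
  have hconv := convexOn_rpow_add_rpow_rpow_one_div (one_le_one_div hb0 hb1)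
    (rpow_nonneg hβ₁.le b) (rpow_nonneg hβ₂.le b)
  refine (hconv.subset Set.Ioi_subset_Ici_self (convex_Ioi 0)).congr fun t ht => ?_
  have hinv (x : ℝ) (hx : 0 ≤ x) : (x ^ b) ^ (1 / b) = x := by
    rw [one_div, rpow_rpow_inv hx hb0.ne']
  simp only [one_div_one_div, mul_rpow (rpow_nonneg hβ₁.le b) (le_of_lt ht), hinv _ hβ₁.le,
    hinv _ hβ₂.le]
end

section
/- Let I ⊆ ℝ be a nonempty open interval and g : I → ℝ₊ a continuous increasing bijection, b ≥ 1, a > 0, and set f = a·g^b. Let α₁, α₂, β₁, β₂ > 0. Then for all x, y, z, w ∈ I: f⁻¹(α₁f(g⁻¹(β₁g(x)+β₂g(y))) + α₂f(g⁻¹(β₁g(z)+β₂g(w)))) ≤ g⁻¹(β₁g(f⁻¹(α₁f(x)+α₂f(z))) + β₂g(f⁻¹(α₁f(y)+α₂f(w)))). -/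
lemma mink2 {b : ℝ} (hb : 1 ≤ b) {α₁ α₂ β₁ β₂ u v p q : ℝ}
    (hα₁ : 0 < α₁) (hα₂ : 0 < α₂) (hβ₁ : 0 < β₁) (hβ₂ : 0 < β₂)
    (hu : 0 < u) (hv : 0 < v) (hp : 0 < p) (hq : 0 < q) :
    (α₁ * (β₁ * u + β₂ * v) ^ b + α₂ * (β₁ * p + β₂ * q) ^ b) ^ b⁻¹ ≤
      β₁ * (α₁ * u ^ b + α₂ * p ^ b) ^ b⁻¹ + β₂ * (α₁ * v ^ b + α₂ * q ^ b) ^ b⁻¹ := by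
  have hb0 : (0:ℝ) < b := lt_of_lt_of_le one_pos hb
  have hbne : b ≠ 0 := ne_of_gt hb0
  set F : Fin 2 → ℝ := ![β₁ * (α₁ ^ b⁻¹ * u), β₁ * (α₂ ^ b⁻¹ * p)] with hF
  set G : Fin 2 → ℝ := ![β₂ * (α₁ ^ b⁻¹ * v), β₂ * (α₂ ^ b⁻¹ * q)] with hG
  have key := Real.Lp_add_le Finset.univ F G hb
  rw [Fin.sum_univ_two, Fin.sum_univ_two, Fin.sum_univ_two] at key
  have hα₁b : (0:ℝ) < α₁ ^ b⁻¹ := Real.rpow_pos_of_pos hα₁ _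
  have hα₂b : (0:ℝ) < α₂ ^ b⁻¹ := Real.rpow_pos_of_pos hα₂ _
  simp only [hF, hG, Matrix.cons_val_zero, Matrix.cons_val_one, Matrix.head_cons] at key
  rw [abs_of_pos (by positivity), abs_of_pos (by positivity), abs_of_pos (by positivity),
    abs_of_pos (by positivity), abs_of_pos (by positivity), abs_of_pos (by positivity)] at key
  have e1 : β₁ * (α₁ ^ b⁻¹ * u) + β₂ * (α₁ ^ b⁻¹ * v) = α₁ ^ b⁻¹ * (β₁ * u + β₂ * v) := by ring
  have e2 : β₁ * (α₂ ^ b⁻¹ * p) + β₂ * (α₂ ^ b⁻¹ * q) = α₂ ^ b⁻¹ * (β₁ * p + β₂ * q) := by ring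
  rw [e1, e2] at key
  have rinv : ∀ c : ℝ, 0 < c → (c ^ b⁻¹ : ℝ) ^ b = c := fun c hc =>
    Real.rpow_inv_rpow hc.le hbne
  have mr : ∀ c d : ℝ, 0 < c → 0 < d → (c * d) ^ b = c ^ b * d ^ b := fun c d hc hd =>
    Real.mul_rpow hc.le hd.le
  rw [mr _ _ hα₁b (by positivity), mr _ _ hα₂b (by positivity),
    rinv _ hα₁, rinv _ hα₂,
    mr _ _ hβ₁ (by positivity), mr _ _ hβ₁ (by positivity),
    mr _ _ hβ₂ (by positivity), mr _ _ hβ₂ (by positivity),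
    mr _ _ hα₁b hu, mr _ _ hα₂b hp, mr _ _ hα₁b hv, mr _ _ hα₂b hq,
    rinv _ hα₁, rinv _ hα₂] at key
  have e3 : β₁ ^ b * (α₁ * u ^ b) + β₁ ^ b * (α₂ * p ^ b) = β₁ ^ b * (α₁ * u ^ b + α₂ * p ^ b) := by
    ring
  have e4 : β₂ ^ b * (α₁ * v ^ b) + β₂ ^ b * (α₂ * q ^ b) = β₂ ^ b * (α₁ * v ^ b + α₂ * q ^ b) := by
    ring
  rw [e3, e4, one_div,
    Real.mul_rpow (by positivity) (by positivity),
    Real.mul_rpow (by positivity) (by positivity),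
    Real.rpow_rpow_inv hβ₁.le hbne, Real.rpow_rpow_inv hβ₂.le hbne] at key
  exact key


theorem stmt_13 (I : Set ℝ) (hI : IsOpen I) (hIne : I.Nonempty) (hIconv : Convex ℝ I)
    (g : ℝ → ℝ) (hgpos : ∀ t ∈ I, 0 < g t)
    (hgmono : StrictMonoOn g I) (hgcont : ContinuousOn g I)
    (hgsurj : g '' I = Set.Ioi 0)
    (a b : ℝ) (ha : 0 < a) (hb : 1 ≤ b)
    (f : ℝ → ℝ) (hf : ∀ t, f t = a * (g t) ^ b)
    (ginv finv : ℝ → ℝ)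
    (hginv : ∀ t ∈ I, ginv (g t) = t) (hginv' : ∀ s : ℝ, 0 < s → ginv s ∈ I ∧ g (ginv s) = s)
    (hfinv : ∀ t ∈ I, finv (f t) = t) (hfinv' : ∀ s : ℝ, 0 < s → finv s ∈ I ∧ f (finv s) = s)
    (α₁ α₂ β₁ β₂ : ℝ) (hα₁ : 0 < α₁) (hα₂ : 0 < α₂) (hβ₁ : 0 < β₁) (hβ₂ : 0 < β₂)
    (x y z w : ℝ) (hx : x ∈ I) (hy : y ∈ I) (hz : z ∈ I) (hw : w ∈ I) :
    finv (α₁ * f (ginv (β₁ * g x + β₂ * g y)) + α₂ * f (ginv (β₁ * g z + β₂ * g w))) ≤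
      ginv (β₁ * g (finv (α₁ * f x + α₂ * f z)) + β₂ * g (finv (α₁ * f y + α₂ * f w))) := by
  have hb0 : (0:ℝ) < b := lt_of_lt_of_le one_pos hb
  have hbne : b ≠ 0 := ne_of_gt hb0
  -- positivity of f on I
  have hfpos : ∀ t ∈ I, 0 < f t := fun t ht => by
    rw [hf t]; exact mul_pos ha (Real.rpow_pos_of_pos (hgpos t ht) b)
  -- finv formula
  have finv_eq : ∀ s : ℝ, 0 < s → finv s = ginv ((s / a) ^ b⁻¹) := by
    intro s hs
    obtain ⟨htI, hts⟩ := hfinv' s hs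
    have hgt : 0 < g (finv s) := hgpos _ htI
    rw [hf] at hts
    have : s / a = g (finv s) ^ b := by
      rw [div_eq_iff (ne_of_gt ha)]; linear_combination -hts
    rw [this, Real.rpow_rpow_inv hgt.le hbne, hginv _ htI]
  -- monotonicity of ginv on positives
  have ginv_mono : ∀ s₁ s₂ : ℝ, 0 < s₁ → 0 < s₂ → s₁ ≤ s₂ → ginv s₁ ≤ ginv s₂ := by
    intro s₁ s₂ h₁ h₂ hle
    obtain ⟨m₁, e₁⟩ := hginv' s₁ h₁
    obtain ⟨m₂, e₂⟩ := hginv' s₂ h₂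
    rw [← e₁, ← e₂] at hle
    exact (hgmono.le_iff_le m₁ m₂).mp hle
  set u := g x with hu; set v := g y with hv; set p := g z with hp; set q := g w with hq
  have hu0 : 0 < u := hgpos x hx
  have hv0 : 0 < v := hgpos y hy
  have hp0 : 0 < p := hgpos z hz
  have hq0 : 0 < q := hgpos w hw
  have hc₁ : 0 < β₁ * u + β₂ * v := by positivity
  have hc₂ : 0 < β₁ * p + β₂ * q := by positivity
  obtain ⟨hm₁, he₁⟩ := hginv' _ hc₁
  obtain ⟨hm₂, he₂⟩ := hginv' _ hc₂
  -- compute f at ginv points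
  have hf₁ : f (ginv (β₁ * u + β₂ * v)) = a * (β₁ * u + β₂ * v) ^ b := by rw [hf, he₁]
  have hf₂ : f (ginv (β₁ * p + β₂ * q)) = a * (β₁ * p + β₂ * q) ^ b := by rw [hf, he₂]
  -- LHS simplification
  have hS : 0 < α₁ * f (ginv (β₁ * u + β₂ * v)) + α₂ * f (ginv (β₁ * p + β₂ * q)) := by
    rw [hf₁, hf₂]; positivity
  have hLdiv : (α₁ * f (ginv (β₁ * u + β₂ * v)) + α₂ * f (ginv (β₁ * p + β₂ * q))) / a
      = α₁ * (β₁ * u + β₂ * v) ^ b + α₂ * (β₁ * p + β₂ * q) ^ b := by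
    rw [hf₁, hf₂]; field_simp
  have hLHS : finv (α₁ * f (ginv (β₁ * u + β₂ * v)) + α₂ * f (ginv (β₁ * p + β₂ * q)))
      = ginv ((α₁ * (β₁ * u + β₂ * v) ^ b + α₂ * (β₁ * p + β₂ * q) ^ b) ^ b⁻¹) := by
    rw [finv_eq _ hS, hLdiv]
  -- RHS simplification
  have hT₁ : 0 < α₁ * f x + α₂ * f z := by
    have := hfpos x hx; have := hfpos z hz; positivity
  have hT₂ : 0 < α₁ * f y + α₂ * f w := by
    have := hfpos y hy; have := hfpos w hw; positivity
  have hg₁ : g (finv (α₁ * f x + α₂ * f z)) = (α₁ * u ^ b + α₂ * p ^ b) ^ b⁻¹ := by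
    rw [finv_eq _ hT₁]
    have hd : (α₁ * f x + α₂ * f z) / a = α₁ * u ^ b + α₂ * p ^ b := by
      rw [hf x, hf z]; field_simp; ring
    rw [hd]
    exact (hginv' _ (by positivity)).2
  have hg₂ : g (finv (α₁ * f y + α₂ * f w)) = (α₁ * v ^ b + α₂ * q ^ b) ^ b⁻¹ := by
    rw [finv_eq _ hT₂]
    have hd : (α₁ * f y + α₂ * f w) / a = α₁ * v ^ b + α₂ * q ^ b := by
      rw [hf y, hf w]; field_simp; ring
    rw [hd]
    exact (hginv' _ (by positivity)).2
  rw [hLHS, hg₁, hg₂]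
  exact ginv_mono _ _ (by positivity) (by positivity)
    (mink2 hb hα₁ hα₂ hβ₁ hβ₂ hu0 hv0 hp0 hq0)
end

section
/- Let Γ ⊆ (0,1) be nonempty, closed under the operations (γ₁, γ₂) ↦ γ₁γ₂ and γ ↦ 1−γ. Then Γ is dense in (0,1). -/
theorem stmt_17 (Γ : Set ℝ) (hΓsub : Γ ⊆ Set.Ioo 0 1) (hΓne : Γ.Nonempty)
    (hmul : ∀ γ₁ ∈ Γ, ∀ γ₂ ∈ Γ, γ₁ * γ₂ ∈ Γ)
    (hcompl : ∀ γ ∈ Γ, 1 - γ ∈ Γ) :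
    Set.Ioo (0 : ℝ) 1 ⊆ closure Γ := by
  intro c hc
  obtain ⟨hc0, hc1⟩ := hc
  by_contra hcl
  obtain ⟨γ₀, hγ₀⟩ := hΓne
  obtain ⟨h0, h1⟩ := hΓsub hγ₀
  -- all positive powers of γ₀ are in Γ
  have hpow : ∀ n : ℕ, γ₀ ^ (n + 1) ∈ Γ := by
    intro n
    induction n with
    | zero => simpa using hγ₀
    | succ n ih => rw [pow_succ]; exact hmul _ ih _ hγ₀
  have htend : Filter.Tendsto (fun n : ℕ => γ₀ ^ n) Filter.atTop (nhds 0) :=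
    tendsto_pow_atTop_nhds_zero_of_lt_one h0.le h1
  -- for any ε > 0 there is an element of Γ above 1 - ε
  have hclose1 : ∀ ε : ℝ, 0 < ε → ∃ γ ∈ Γ, 1 - ε < γ ∧ γ < 1 := by
    intro ε hε
    have : ∀ᶠ n : ℕ in Filter.atTop, γ₀ ^ n < ε :=
      htend.eventually (eventually_lt_nhds hε)
    obtain ⟨N, hN⟩ := Filter.eventually_atTop.mp this
    refine ⟨1 - γ₀ ^ (N + 1), hcompl _ (hpow N), ?_, ?_⟩
    · have := hN (N + 1) (by omega)
      linarith
    · have : 0 < γ₀ ^ (N + 1) := pow_pos h0 _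
      linarith
  -- the set of elements of Γ above c
  set S := {x | x ∈ Γ ∧ c < x} with hSdef
  have hSsub : S ⊆ Γ := fun x hx => hx.1
  have hSne : S.Nonempty := by
    obtain ⟨γ, hγ, hγ1, _⟩ := hclose1 (1 - c) (by linarith)
    exact ⟨γ, hγ, by linarith⟩
  have hSbdd : BddBelow S := ⟨c, fun x hx => hx.2.le⟩
  set β := sInf S with hβdef
  have hβmem : β ∈ closure Γ :=
    closure_mono hSsub (csInf_mem_closure hSne hSbdd)
  have hcβ : c ≤ β := le_csInf hSne fun x hx => hx.2.le
  have hcβ' : c < β := lt_of_le_of_ne hcβ (fun h => hcl (h ▸ hβmem))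
  have hβ1 : β ≤ 1 := by
    obtain ⟨x, hxΓ, hxc⟩ := hSne
    exact le_trans (csInf_le hSbdd ⟨hxΓ, hxc⟩) (hΓsub hxΓ).2.le
  -- closure Γ is disjoint from the open interval (c, β)
  have hgap : closure Γ ⊆ (Set.Ioo c β)ᶜ := by
    refine closure_minimal (fun x hx hxmem => ?_) isOpen_Ioo.isClosed_compl
    exact absurd (csInf_le hSbdd ⟨hx, hxmem.1⟩) (not_le.mpr hxmem.2)
  -- pick γ ∈ Γ with γ close enough to 1 so that c < γ * β < β
  have hβ0 : 0 < β := lt_trans hc0 hcβ'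
  obtain ⟨γ, hγΓ, hγ1, hγlt1⟩ := hclose1 (1 - c / β) (by
    have : c / β < 1 := (div_lt_one hβ0).mpr hcβ'
    linarith)
  have hγpos : 0 < γ := lt_of_le_of_lt (div_nonneg hc0.le hβ0.le) (by linarith)
  have hmem : γ * β ∈ closure Γ := by
    have hmaps : Set.MapsTo (fun x => γ * x) Γ Γ := fun x hx => hmul _ hγΓ _ hx
    exact map_mem_closure (continuous_const.mul continuous_id) hβmem hmaps
  have h1 : c < γ * β := by
    have := (div_lt_iff₀ hβ0).mp (by linarith : c / β < γ)
    linarith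
  have h2 : γ * β < β := by nlinarith
  exact hgap hmem ⟨h1, h2⟩
end

section
/- Let φ : ℝ₊ → ℝ₊ be an increasing continuous bijection of ℝ₊ and α ∈ (0,1). For each t ∈ (0,1) define Ψ_t(x₁,x₂) = φ⁻¹(tφ(x₁)+(1−t)φ(x₂)). If Ψ_α is convex on ℝ₊ × ℝ₊, then Ψ_t is convex for every t ∈ (0,1). -/
open Set Filter

theorem stmt_18 (φ φinv : ℝ → ℝ)
    (hφpos : ∀ t : ℝ, 0 < t → 0 < φ t)
    (hφmono : StrictMonoOn φ (Set.Ioi 0)) (hφcont : ContinuousOn φ (Set.Ioi 0))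
    (hφsurj : φ '' Set.Ioi 0 = Set.Ioi 0)
    (hφinv : ∀ t : ℝ, 0 < t → φinv (φ t) = t)
    (hφinv' : ∀ s : ℝ, 0 < s → 0 < φinv s ∧ φ (φinv s) = s)
    (α : ℝ) (hα : α ∈ Set.Ioo (0 : ℝ) 1)
    (hconv : ConvexOn ℝ (Set.Ioi 0 ×ˢ Set.Ioi 0)
      (fun x : ℝ × ℝ => φinv (α * φ x.1 + (1 - α) * φ x.2))) :
    ∀ t ∈ Set.Ioo (0 : ℝ) 1,
      ConvexOn ℝ (Set.Ioi 0 ×ˢ Set.Ioi 0)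
        (fun x : ℝ × ℝ => φinv (t * φ x.1 + (1 - t) * φ x.2)) := by
  set S : Set (ℝ × ℝ) := Set.Ioi 0 ×ˢ Set.Ioi 0 with hSdef
  have hS : Convex ℝ S := (convex_Ioi 0).prod (convex_Ioi 0)
  have hcc : ∀ a b u v : ℝ, 0 ≤ a → 0 ≤ b → a + b = 1 → 0 < u → 0 < v → 0 < a*u + b*v := by
    intro a b u v ha hb hab hu hv
    rcases eq_or_lt_of_le ha with h | h
    · have hb1 : b = 1 := by linarith
      rw [← h, hb1]; linarith
    · nlinarith [mul_pos h hu, mul_nonneg hb hv.le]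
  set f : ℝ → ℝ × ℝ → ℝ := fun t x => φinv (t * φ x.1 + (1 - t) * φ x.2) with hf
  have hpos : ∀ t ∈ Set.Ioo (0:ℝ) 1, ∀ x ∈ S, 0 < t * φ x.1 + (1 - t) * φ x.2 := by
    intro t ht x hx
    have h1 := hφpos x.1 hx.1
    have h2 := hφpos x.2 hx.2
    nlinarith [ht.1, ht.2]
  have hfpos : ∀ t ∈ Set.Ioo (0:ℝ) 1, ∀ x ∈ S, 0 < f t x :=
    fun t ht x hx => (hφinv' _ (hpos t ht x hx)).1
  have hinvmono : ∀ u v : ℝ, 0 < u → u ≤ v → φinv u ≤ φinv v := by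
    intro u v hu huv
    by_contra h
    push_neg at h
    have h1 := (hφinv' u hu).1
    have h2 := (hφinv' v (lt_of_lt_of_le hu huv)).1
    have h3 := hφmono (Set.mem_Ioi.mpr h2) (Set.mem_Ioi.mpr h1) h
    rw [(hφinv' u hu).2, (hφinv' v (lt_of_lt_of_le hu huv)).2] at h3
    linarith
  have hinvsmono : StrictMonoOn φinv (Set.Ioi 0) := by
    intro u hu v hv huv
    refine lt_of_le_of_ne (hinvmono u v hu huv.le) ?_
    intro h
    have h' := congrArg φ h
    rw [(hφinv' u hu).2, (hφinv' v hv).2] at h'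
    exact huv.ne h'
  have hinvcont : ∀ u : ℝ, 0 < u → ContinuousAt φinv u := by
    intro u hu
    refine hinvsmono.continuousAt_of_image_mem_nhds (isOpen_Ioi.mem_nhds hu) ?_
    refine Filter.mem_of_superset (isOpen_Ioi.mem_nhds (hφinv' u hu).1) ?_
    intro y hy
    exact ⟨φ y, Set.mem_Ioi.mpr (hφpos y hy), hφinv y hy⟩
  -- the set of good parameters
  set Γ : Set ℝ := {t | t ∈ Set.Ioo (0:ℝ) 1 ∧ ConvexOn ℝ S (f t)} with hΓdef
  have hαΓ : α ∈ Γ := ⟨hα, hconv⟩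
  -- symmetry
  have hsym : ∀ t, t ∈ Γ → (1 - t) ∈ Γ := by
    rintro t ⟨ht, hc⟩
    refine ⟨⟨by linarith [ht.2], by linarith [ht.1]⟩, hS, ?_⟩
    intro x hx y hy a b ha hb hab
    have hx' : ((x.2, x.1) : ℝ × ℝ) ∈ S := ⟨hx.2, hx.1⟩
    have hy' : ((y.2, y.1) : ℝ × ℝ) ∈ S := ⟨hy.2, hy.1⟩
    have h := hc.2 hx' hy' ha hb hab
    simp only [hf, Prod.smul_mk, Prod.mk_add_mk, Prod.fst_add, Prod.snd_add,
      Prod.smul_fst, Prod.smul_snd, smul_eq_mul] at h ⊢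
    have e1 : (1 - t) * φ (a * x.1 + b * y.1) + (1 - (1 - t)) * φ (a * x.2 + b * y.2)
        = t * φ (a * x.2 + b * y.2) + (1 - t) * φ (a * x.1 + b * y.1) := by ring
    have e2 : (1 - t) * φ x.1 + (1 - (1 - t)) * φ x.2 = t * φ x.2 + (1 - t) * φ x.1 := by ring
    have e3 : (1 - t) * φ y.1 + (1 - (1 - t)) * φ y.2 = t * φ y.2 + (1 - t) * φ y.1 := by ring
    rw [e1, e2, e3]
    exact h
  -- the composition identity
  have key : ∀ s t : ℝ, s ∈ Set.Ioo (0:ℝ) 1 → t ∈ Set.Ioo (0:ℝ) 1 → ∀ x ∈ S,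
      f s (f t x, x.2) = f (s*t) x := by
    intro s t hs ht x hx
    simp only [hf]
    rw [(hφinv' _ (hpos t ht x hx)).2]
    congr 1
    ring
  -- multiplicativity
  have hmul : ∀ s t, s ∈ Γ → t ∈ Γ → s * t ∈ Γ := by
    rintro s t ⟨hs, hcs⟩ ⟨ht, hct⟩
    have hst : s * t ∈ Set.Ioo (0:ℝ) 1 :=
      ⟨mul_pos hs.1 ht.1, by nlinarith [hs.1, hs.2, ht.1, ht.2]⟩
    refine ⟨hst, hS, ?_⟩
    intro x hx y hy a b ha hb hab
    have hxyS : a • x + b • y ∈ S := hS hx hy ha hb hab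
    have hftx := hfpos t ht x hx
    have hfty := hfpos t ht y hy
    have hcomb : 0 < a * f t x + b * f t y := hcc a b _ _ ha hb hab hftx hfty
    have h1 : f t (a • x + b • y) ≤ a * f t x + b * f t y := by
      have := hct.2 hx hy ha hb hab
      simpa using this
    have mono1 : f s (f t (a • x + b • y), (a • x + b • y).2)
        ≤ f s (a * f t x + b * f t y, (a • x + b • y).2) := by
      have hp1 : ((f t (a • x + b • y), (a • x + b • y).2) : ℝ × ℝ) ∈ S :=
        ⟨hfpos t ht _ hxyS, hxyS.2⟩
      have hφle : φ (f t (a • x + b • y)) ≤ φ (a * f t x + b * f t y) :=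
        hφmono.monotoneOn (Set.mem_Ioi.mpr (hfpos t ht _ hxyS)) (Set.mem_Ioi.mpr hcomb) h1
      simp only [hf]
      apply hinvmono _ _ (hpos s hs _ hp1)
      have := mul_le_mul_of_nonneg_left hφle hs.1.le
      linarith
    have h2 : f s (a * f t x + b * f t y, a * x.2 + b * y.2)
        ≤ a * f s (f t x, x.2) + b * f s (f t y, y.2) := by
      have := hcs.2 (show ((f t x, x.2) : ℝ × ℝ) ∈ S from ⟨hftx, hx.2⟩)
        (show ((f t y, y.2) : ℝ × ℝ) ∈ S from ⟨hfty, hy.2⟩) ha hb hab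
      simpa [Prod.smul_mk, Prod.mk_add_mk] using this
    have e2 : (a • x + b • y).2 = a * x.2 + b * y.2 := by
      simp [Prod.snd_add, Prod.smul_snd]
    calc f (s*t) (a • x + b • y)
        = f s (f t (a • x + b • y), (a • x + b • y).2) := (key s t hs ht _ hxyS).symm
      _ ≤ f s (a * f t x + b * f t y, (a • x + b • y).2) := mono1
      _ = f s (a * f t x + b * f t y, a * x.2 + b * y.2) := by rw [e2]
      _ ≤ a * f s (f t x, x.2) + b * f s (f t y, y.2) := h2
      _ = a • f (s*t) x + b • f (s*t) y := by
          rw [key s t hs ht x hx, key s t hs ht y hy]; simp [smul_eq_mul]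
  -- powers
  have hpow : ∀ s, s ∈ Γ → ∀ n : ℕ, s ^ (n+1) ∈ Γ := by
    intro s hsΓ n
    induction n with
    | zero => simpa using hsΓ
    | succ k ih =>
      have := hmul s (s ^ (k+1)) hsΓ ih
      rw [show s * s ^ (k+1) = s ^ (k+1+1) from by ring] at this
      exact this
  -- density
  have hdense : ∀ t ∈ Set.Ioo (0:ℝ) 1, ∀ ε : ℝ, 0 < ε → ∃ s ∈ Γ, |s - t| < ε := by
    intro t ht ε hε
    have hα0 := hα.1
    have hα1 := hα.2
    -- choose n with α^(n+1) < min (1-t) ε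
    have htend : Tendsto (fun n : ℕ => α ^ n) atTop (nhds 0) :=
      tendsto_pow_atTop_nhds_zero_of_lt_one hα0.le hα1
    have hδ : 0 < min (1 - t) ε := lt_min (by linarith [ht.2]) hε
    obtain ⟨N, hN⟩ := (htend.eventually (eventually_lt_nhds hδ)).exists_forall_of_atTop
    set c : ℝ := α ^ (N + 1) with hc
    have hcδ : c < min (1 - t) ε := hN (N+1) (Nat.le_succ N)
    have hcpos : 0 < c := pow_pos hα0 _
    have hc1 : c < 1 - t := lt_of_lt_of_le hcδ (min_le_left _ _)
    have hcε : c < ε := lt_of_lt_of_le hcδ (min_le_right _ _)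
    set β : ℝ := 1 - c with hβ
    have hβΓ : β ∈ Γ := hsym _ (hpow α hαΓ N)
    have hβ0 : 0 < β := by simp only [hβ]; linarith [ht.1]
    have hβ1 : β < 1 := by simp only [hβ]; linarith
    have htβ : t < β := by simp only [hβ]; linarith
    -- find least K with β^K < t
    have hβtend : Tendsto (fun n : ℕ => β ^ n) atTop (nhds 0) :=
      tendsto_pow_atTop_nhds_zero_of_lt_one hβ0.le hβ1
    have hex : ∃ j : ℕ, β ^ j < t := (hβtend.eventually (eventually_lt_nhds ht.1)).exists
    set K := Nat.find hex with hK
    have hKlt : β ^ K < t := Nat.find_spec hex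
    have hK2 : 2 ≤ K := by
      by_contra h
      push_neg at h
      interval_cases K
      · simp at hKlt; linarith [ht.2]
      · simp at hKlt; linarith
    obtain ⟨k, hkK⟩ : ∃ k, K = k + 2 := ⟨K - 2, by omega⟩
    have hkmin : ¬ (β ^ (k+1) < t) := Nat.find_min hex (by omega)
    push_neg at hkmin
    have hsΓ : β ^ (k+1) ∈ Γ := hpow β hβΓ k
    refine ⟨β ^ (k+1), hsΓ, ?_⟩
    have hle1 : β ^ (k+1) ≤ 1 := pow_le_one₀ hβ0.le hβ1.le
    have hKlt' : β * β ^ (k+1) < t := by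
      have : β ^ K = β * β ^ (k+1) := by rw [hkK]; ring
      linarith [this ▸ hKlt]
    -- β^(k+1) - t < c * β^(k+1) ≤ c < ε
    rw [abs_of_nonneg (by linarith)]
    have hpowpos : 0 < β ^ (k+1) := pow_pos hβ0 _
    nlinarith
  -- closure step
  intro t ht
  show ConvexOn ℝ S (f t)
  refine ⟨hS, ?_⟩
  intro x hx y hy a b ha hb hab
  have hxyS : a • x + b • y ∈ S := hS hx hy ha hb hab
  have hcl : t ∈ closure Γ := by
    rw [Metric.mem_closure_iff]
    intro ε hε
    obtain ⟨s, hsΓ, hs⟩ := hdense t ht ε hε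
    exact ⟨s, hsΓ, by rwa [Real.dist_eq, abs_sub_comm]⟩
  have hne : (nhdsWithin t Γ).NeBot := mem_closure_iff_nhdsWithin_neBot.mp hcl
  have hcontG : ∀ z, z ∈ S → ContinuousAt (fun s : ℝ => f s z) t := by
    intro z hz
    have h1 : ContinuousAt (fun s : ℝ => s * φ z.1 + (1 - s) * φ z.2) t := by fun_prop
    exact ContinuousAt.comp (g := φinv) (hinvcont _ (hpos t ht z hz)) h1
  have hG : Tendsto (fun s => a * f s x + b * f s y - f s (a • x + b • y)) (nhdsWithin t Γ)
      (nhds (a * f t x + b * f t y - f t (a • x + b • y))) := by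
    have := (((hcontG x hx).const_mul a).add ((hcontG y hy).const_mul b)).sub
      (hcontG _ hxyS)
    exact this.mono_left nhdsWithin_le_nhds
  have hineq : ∀ᶠ s in nhdsWithin t Γ, 0 ≤ a * f s x + b * f s y - f s (a • x + b • y) := by
    filter_upwards [self_mem_nhdsWithin] with s hs
    have := hs.2.2 hx hy ha hb hab
    simp only [smul_eq_mul] at this
    linarith
  have hfin := ge_of_tendsto hG hineq
  simp only [smul_eq_mul]
  linarith
end
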